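/- arXiv:2501.13483 — 3 statements merged into one kernel-verified Lean document; each statement's English description precedes it below -/
import Mathlib

section
/- (Proposition 1: self-consistency losses with known likelihood are strictly proper.) Let C be a real-valued functional on measurable functions Θ → ℝ and let m ∈ ℝ be such that: (a) m ≤ C(h) for every measurable h : Θ → ℝ, and (b) for every measurable h, C(h) = m if and only if there exists a constant c with h(θ) = c for μ-almost every θ in {θ : f(θ) > 0}. Let q be a posterior approximator with q(θ) > 0 for μ-almost every θ in {θ : f(θ) > 0} and q(θ) = 0 for μ-almost every θ in {θ : f(θ) = 0}. Then C applied to the Bayesian self-consistency ratio, i.e. C(θ ↦ f(θ)/q(θ)), equals its global minimum m if and only if q(θ) = π(θ) for μ-almost every θ. -/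
open MeasureTheory

/-- Proposition 1: self-consistency losses with known likelihood are strictly proper.
If `C` is a score that is globally minimized (with minimum value `m`) exactly at
measurable functions that are μ-a.e. constant across the posterior support
`{θ | 0 < f θ}`, then `C` applied to the Bayesian self-consistency ratio `f/q`
attains its global minimum `m` if and only if `q = π` μ-almost everywhere. -/
theorem selfConsistency_loss_strictly_proper
    {Θ : Type*} [MeasurableSpace Θ] (μ : Measure Θ) [SigmaFinite μ]
    (f : Θ → ℝ) (hf_meas : Measurable f) (hf_nonneg : ∀ θ, 0 ≤ f θ)
    (hf_int : Integrable f μ)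
    (Z : ℝ) (hZ : Z = ∫ θ, f θ ∂μ) (hZ_pos : 0 < Z)
    (π : Θ → ℝ) (hπ : π = fun θ => Z⁻¹ * f θ)
    (C : (Θ → ℝ) → ℝ) (m : ℝ)
    (hC_min : ∀ h : Θ → ℝ, Measurable h → m ≤ C h)
    (hC_eq : ∀ h : Θ → ℝ, Measurable h →
      (C h = m ↔ ∃ c : ℝ, ∀ᵐ θ ∂μ, 0 < f θ → h θ = c))
    (q : Θ → ℝ) (hq_meas : Measurable q) (hq_nonneg : ∀ θ, 0 ≤ q θ)
    (hq_int : ∫ θ, q θ ∂μ = 1)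
    (hq_pos : ∀ᵐ θ ∂μ, 0 < f θ → 0 < q θ)
    (hq_zero : ∀ᵐ θ ∂μ, f θ = 0 → q θ = 0) :
    C (fun θ => f θ / q θ) = m ↔ (∀ᵐ θ ∂μ, q θ = π θ) := by
  have hmeas : Measurable (fun θ => f θ / q θ) := hf_meas.div hq_meas
  rw [hC_eq _ hmeas]
  constructor
  · rintro ⟨c, hc⟩
    -- a.e., f = c * q
    have hfeq : ∀ᵐ θ ∂μ, f θ = c * q θ := by
      filter_upwards [hc, hq_pos, hq_zero] with θ h1 h2 h3
      rcases lt_or_eq_of_le (hf_nonneg θ) with hpos | hzero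
      · have hq := h2 hpos
        have := h1 hpos
        field_simp at this
        linarith [this]
      · rw [← hzero, h3 hzero.symm, mul_zero]
    have hcZ : Z = c := by
      rw [hZ, integral_congr_ae hfeq]
      simp [integral_const_mul, hq_int]
    filter_upwards [hfeq] with θ h1
    rw [hπ]
    have h2 : f θ = Z * q θ := by rw [hcZ]; exact h1
    simp only [h2]
    field_simp
  · intro hqe
    refine ⟨Z, ?_⟩
    filter_upwards [hqe] with θ h1 hpos
    rw [h1, hπ]
    have hf0 : f θ ≠ 0 := ne_of_gt hpos
    simp only []
    field_simp
end

section
/- (Proposition 2: the variance of the log Bayesian self-consistency ratio is a strictly proper loss.) Let ν be a probability measure on Θ with ν absolutely continuous with respect to μ, ν({θ : f(θ) = 0}) = 0, and Radon–Nikodym density dν/dμ strictly positive μ-almost everywhere on {θ : f(θ) > 0} (so the support of the proposal ν encompasses the support of the posterior). Let q be a posterior approximator with q(θ) > 0 for μ-almost every θ in {θ : f(θ) > 0}, q(θ) = 0 for μ-almost every θ in {θ : f(θ) = 0}, and such that θ ↦ log f(θ) − log q(θ) is square-integrable with respect to ν. Then Var_ν[θ ↦ log f(θ) − log q(θ)]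 = 0 (its global minimum, since variances are nonnegative) if and only if q(θ) = π(θ) for μ-almost every θ. -/
open MeasureTheory ProbabilityTheory

/-- Proposition 2: the variance of the log Bayesian self-consistency ratio is a strictly
proper loss. If the proposal `ν` is absolutely continuous w.r.t. `μ`, puts no mass on
`{f = 0}`, and its density is positive μ-a.e. on the posterior support `{0 < f}`, then
for a posterior approximator `q` (positive a.e. on the support, vanishing a.e. off it,
with square-integrable log-ratio) the variance `Var_ν[log f − log q]` equals `0`
if and only if `q = π` μ-almost everywhere. -/
theorem variance_selfConsistency_strictly_proper
    {Θ : Type*} [MeasurableSpace Θ] (μ : Measure Θ) [SigmaFinite μ]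
    (f : Θ → ℝ) (hf_meas : Measurable f) (hf_nonneg : ∀ θ, 0 ≤ f θ)
    (hf_int : Integrable f μ)
    (Z : ℝ) (hZ : Z = ∫ θ, f θ ∂μ) (hZ_pos : 0 < Z)
    (π : Θ → ℝ) (hπ : π = fun θ => Z⁻¹ * f θ)
    (ν : Measure Θ) [IsProbabilityMeasure ν] (hν_ac : ν ≪ μ)
    (hν_zero : ν {θ | f θ = 0} = 0)
    (hν_pos : ∀ᵐ θ ∂μ, 0 < f θ → 0 < ν.rnDeriv μ θ)
    (q : Θ → ℝ) (hq_meas : Measurable q) (hq_nonneg : ∀ θ, 0 ≤ q θ)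
    (hq_int : ∫ θ, q θ ∂μ = 1)
    (hq_pos : ∀ᵐ θ ∂μ, 0 < f θ → 0 < q θ)
    (hq_zero : ∀ᵐ θ ∂μ, f θ = 0 → q θ = 0)
    (h_sq : MemLp (fun θ => Real.log (f θ) - Real.log (q θ)) 2 ν) :
    variance (fun θ => Real.log (f θ) - Real.log (q θ)) ν = 0 ↔
      (∀ᵐ θ ∂μ, q θ = π θ) := by
  set g : Θ → ℝ := fun θ => Real.log (f θ) - Real.log (q θ) with hg
  have hg_meas : Measurable g :=
    (Real.measurable_log.comp hf_meas).sub (Real.measurable_log.comp hq_meas)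
  have hvar_iff : variance g ν = 0 ↔ evariance g ν = 0 := by
    rw [variance, ENNReal.toReal_eq_zero_iff]
    constructor
    · rintro (h | h)
      · exact h
      · exact absurd h h_sq.evariance_lt_top.ne
    · exact Or.inl
  -- transfer of ν-a.e. statements to μ-a.e. on {0 < f}
  have transfer : ∀ (P : Θ → Prop), (∀ᵐ θ ∂ν, P θ) →
      ∀ᵐ θ ∂μ, 0 < f θ → P θ := by
    intro P hP
    rw [MeasureTheory.ae_iff] at hP
    set s : Set Θ := {θ | ¬ P θ} with hs
    set t : Set Θ := toMeasurable ν s with ht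
    have htm : MeasurableSet t := measurableSet_toMeasurable ν s
    have hνt : ν t = 0 := by rw [ht, measure_toMeasurable]; exact hP
    have hlint : ∫⁻ θ in t, ν.rnDeriv μ θ ∂μ = 0 := by
      rw [Measure.setLIntegral_rnDeriv hν_ac]; exact hνt
    have h0 : ∀ᵐ θ ∂μ.restrict t, ν.rnDeriv μ θ = 0 := by
      have := (lintegral_eq_zero_iff (Measure.measurable_rnDeriv ν μ)).mp hlint
      filter_upwards [this] with θ hθ using hθ
    have h0' : ∀ᵐ θ ∂μ, θ ∈ t → ν.rnDeriv μ θ = 0 :=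
      (ae_restrict_iff' htm).mp h0
    filter_upwards [h0', hν_pos] with θ h1 h2 hf
    by_contra hPθ
    have : θ ∈ t := subset_toMeasurable ν s hPθ
    exact absurd (h1 this) (h2 hf).ne'
  constructor
  · -- variance zero implies q = π a.e.
    intro hvar
    have hev : evariance g ν = 0 := hvar_iff.mp hvar
    have hconst : g =ᵐ[ν] fun _ => ∫ θ, g θ ∂ν :=
      (evariance_eq_zero_iff hg_meas.aemeasurable).mp hev
    set c : ℝ := ∫ θ, g θ ∂ν with hc
    have hμc : ∀ᵐ θ ∂μ, 0 < f θ → g θ = c := transfer _ hconst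
    have hfq : ∀ᵐ θ ∂μ, f θ = Real.exp c * q θ := by
      filter_upwards [hμc, hq_pos, hq_zero] with θ h1 h2 h3
      rcases (hf_nonneg θ).lt_or_eq with hf | hf
      · have hq : 0 < q θ := h2 hf
        have : Real.log (f θ) = c + Real.log (q θ) := by
          have := h1 hf; simp only [hg] at this; linarith
        have := congrArg Real.exp this
        rwa [Real.exp_log hf, Real.exp_add, Real.exp_log hq] at this
      · rw [← hf, h3 hf.symm, mul_zero]
    have hq_integrable : Integrable (fun θ => Real.exp c * q θ) μ :=
      hf_int.congr hfq
    have hq_int' : Integrable q μ := by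
      have := hq_integrable.const_mul (Real.exp c)⁻¹
      simpa [← mul_assoc, inv_mul_cancel₀ (Real.exp_ne_zero c)] using this
    have hZc : Z = Real.exp c := by
      rw [hZ, integral_congr_ae hfq, integral_const_mul, hq_int, mul_one]
    filter_upwards [hfq] with θ hθ
    rw [hπ]
    have : f θ = Z * q θ := by rw [hZc]; exact hθ
    field_simp [this, hZ_pos.ne']
    rw [this]; ring
  · -- q = π a.e. implies variance zero
    intro hqπ
    have hν_qπ : ∀ᵐ θ ∂ν, q θ = π θ := hν_ac.ae_le hqπ
    have hν_fpos : ∀ᵐ θ ∂ν, 0 < f θ := by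
      have : ∀ᵐ θ ∂ν, ¬ (f θ = 0) := by
        rw [ae_iff]; simpa using hν_zero
      filter_upwards [this] with θ h
      exact (hf_nonneg θ).lt_of_ne (Ne.symm h)
    have hgconst : g =ᵐ[ν] fun _ => Real.log Z := by
      filter_upwards [hν_qπ, hν_fpos] with θ h1 h2
      simp only [hg, h1, hπ]
      rw [Real.log_mul (inv_ne_zero hZ_pos.ne') h2.ne', Real.log_inv]
      ring
    have hmean : (∫ θ, g θ ∂ν) = Real.log Z := by
      rw [integral_congr_ae hgconst]; simp
    rw [hvar_iff]
    apply (evariance_eq_zero_iff hg_meas.aemeasurable).mpr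
    rw [hmean]
    exact hgconst
end

section
/- (Proposition 3, concrete form: the semi-supervised loss is strictly proper.) Let ν be a probability measure on Θ with ν absolutely continuous with respect to μ, ν({θ : f(θ) = 0}) = 0, and Radon–Nikodym density dν/dμ strictly positive μ-almost everywhere on {θ : f(θ) > 0}. Let q be a posterior approximator with q(θ) > 0 for μ-almost every θ in {θ : f(θ) > 0}, q(θ) = 0 for μ-almost every θ in {θ : f(θ) = 0}, and θ ↦ log f(θ) − log q(θ) square-integrable with respect to ν. Let P := μ.withDensity(π) and Q := μ.withDensity(q) be the probability measures with densities π and q, and let λ > 0. Then the semi-supervised loss KL(P ∥ Q) + λ·Var_ν[θ ↦ log f(θ) − log q(θ)] (a sum in [0,∞] of the Kullback–Leibler divergence and λ times the self-consistency variance) equals 0, its global minimum, if and only if q(θ) = π(θ) for μ-almost every θ. -/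
open MeasureTheory ProbabilityTheory Classical

/-- The Kullback–Leibler divergence `KL(P ∥ Q)`, valued in `[0, ∞]`: it equals
`∫ log (dP/dQ) dP` when `P ≪ Q` and this integrand is integrable, and `∞` otherwise. -/

noncomputable def klDiv {Θ : Type*} [MeasurableSpace Θ] (P Q : Measure Θ) : ENNReal :=
  if P ≪ Q ∧ Integrable (fun θ => Real.log (P.rnDeriv Q θ).toReal) P then
    ENNReal.ofReal (∫ θ, Real.log (P.rnDeriv Q θ).toReal ∂P)
  else ⊤

lemma evariance_congr_aux {Ω : Type*} [MeasurableSpace Ω] {X Y : Ω → ℝ} {μ : Measure Ω}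
    (h : X =ᵐ[μ] Y) : evariance X μ = evariance Y μ := by
  have hm : μ[X] = μ[Y] := integral_congr_ae h
  unfold evariance
  rw [hm]
  exact lintegral_congr_ae (h.mono fun ω hω => by simp only [hω])

/-- Proposition 3 (concrete form): the semi-supervised loss — the sum (in `[0,∞]`) of the
Kullback–Leibler divergence `KL(P ∥ Q)` between the analytic posterior measure `P` and
the approximate posterior measure `Q`, plus `λ` times the self-consistency variance —
equals `0`, its global minimum, if and only if `q = π` μ-almost everywhere. -/
theorem semiSupervised_loss_strictly_proper
    {Θ : Type*} [MeasurableSpace Θ] (μ : Measure Θ) [SigmaFinite μ]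
    (f : Θ → ℝ) (hf_meas : Measurable f) (hf_nonneg : ∀ θ, 0 ≤ f θ)
    (hf_int : Integrable f μ)
    (Z : ℝ) (hZ : Z = ∫ θ, f θ ∂μ) (hZ_pos : 0 < Z)
    (π : Θ → ℝ) (hπ : π = fun θ => Z⁻¹ * f θ)
    (ν : Measure Θ) [IsProbabilityMeasure ν] (hν_ac : ν ≪ μ)
    (hν_zero : ν {θ | f θ = 0} = 0)
    (hν_pos : ∀ᵐ θ ∂μ, 0 < f θ → 0 < ν.rnDeriv μ θ)
    (q : Θ → ℝ) (hq_meas : Measurable q) (hq_nonneg : ∀ θ, 0 ≤ q θ)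
    (hq_int : ∫ θ, q θ ∂μ = 1)
    (hq_pos : ∀ᵐ θ ∂μ, 0 < f θ → 0 < q θ)
    (hq_zero : ∀ᵐ θ ∂μ, f θ = 0 → q θ = 0)
    (h_sq : MemLp (fun θ => Real.log (f θ) - Real.log (q θ)) 2 ν)
    (P Q : Measure Θ)
    (hP : P = μ.withDensity (fun θ => ENNReal.ofReal (π θ)))
    (hQ : Q = μ.withDensity (fun θ => ENNReal.ofReal (q θ)))
    (lam : ℝ) (hlam : 0 < lam) :
    klDiv P Q +
        ENNReal.ofReal
          (lam * variance (fun θ => Real.log (f θ) - Real.log (q θ)) ν) = 0 ↔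
      (∀ᵐ θ ∂μ, q θ = π θ) := by
  subst hP hQ hπ
  set g : Θ → ℝ := fun θ => Real.log (f θ) - Real.log (q θ) with hg
  have hg_meas : Measurable g :=
    (Real.measurable_log.comp hf_meas).sub (Real.measurable_log.comp hq_meas)
  constructor
  · intro h0
    rw [add_eq_zero] at h0
    obtain ⟨-, hvar0⟩ := h0
    rw [ENNReal.ofReal_eq_zero] at hvar0
    have hvnn := variance_nonneg g ν
    have hvar : variance g ν = 0 := by nlinarith
    have hev : evariance g ν = 0 := by
      have hlt := h_sq.evariance_lt_top
      rw [variance, ENNReal.toReal_eq_zero_iff] at hvar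
      rcases hvar with h | h
      · exact h
      · exact absurd h hlt.ne
    have hgν : g =ᵐ[ν] fun _ => ν[g] :=
      (evariance_eq_zero_iff hg_meas.aemeasurable).mp hev
    set m : ℝ := ν[g] with hm
    set A : Set Θ := {θ | g θ = m} with hA
    have hA_meas : MeasurableSet A := hg_meas (measurableSet_singleton m)
    have hAc : ν Aᶜ = 0 := by
      rw [Filter.EventuallyEq, ae_iff] at hgν
      exact hgν
    set S : Set Θ := Aᶜ ∩ {θ | 0 < f θ} with hS
    have hS_meas : MeasurableSet S :=
      hA_meas.compl.inter (measurableSet_lt measurable_const hf_meas)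
    have hνS : ν S = 0 := measure_mono_null Set.inter_subset_left hAc
    have hlint : ∫⁻ θ in S, ν.rnDeriv μ θ ∂μ = 0 := by
      rw [Measure.setLIntegral_rnDeriv hν_ac S, hνS]
    have hrn0 : ∀ᵐ θ ∂μ, θ ∈ S → ν.rnDeriv μ θ = 0 := by
      have := (setLIntegral_eq_zero_iff' hS_meas
        (Measure.measurable_rnDeriv ν μ).aemeasurable).mp hlint
      exact this
    have hmem : ∀ᵐ θ ∂μ, 0 < f θ → θ ∈ A := by
      filter_upwards [hrn0, hν_pos] with θ h1 h2 hf
      by_contra hθ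
      exact absurd (h1 ⟨hθ, hf⟩) (h2 hf).ne'
    have hqf : ∀ᵐ θ ∂μ, q θ = Real.exp (-m) * f θ := by
      filter_upwards [hmem, hq_pos, hq_zero] with θ h1 h2 h3
      rcases (hf_nonneg θ).lt_or_eq with hf | hf
      · have hq : 0 < q θ := h2 hf
        have hgθ : Real.log (f θ) - Real.log (q θ) = m := h1 hf
        have : Real.log (q θ) = Real.log (f θ) - m := by linarith
        calc q θ = Real.exp (Real.log (q θ)) := (Real.exp_log hq).symm
          _ = Real.exp (-m) * Real.exp (Real.log (f θ)) := by
              rw [this, sub_eq_add_neg, add_comm, Real.exp_add]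
          _ = Real.exp (-m) * f θ := by rw [Real.exp_log hf]
      · rw [h3 hf.symm, ← hf, mul_zero]
    have hint : (1 : ℝ) = Real.exp (-m) * Z := by
      rw [← hq_int, integral_congr_ae hqf, integral_const_mul, ← hZ]
    have hexp : Real.exp (-m) = Z⁻¹ := by
      field_simp at hint ⊢
      linarith [hint]
    filter_upwards [hqf] with θ hθ
    rw [hθ, hexp]
  · intro hqπ
    have hPQ : μ.withDensity (fun θ => ENNReal.ofReal (q θ)) =
        μ.withDensity (fun θ => ENNReal.ofReal (Z⁻¹ * f θ)) :=
      withDensity_congr_ae (hqπ.mono fun θ h => by simp only [h])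
    rw [hPQ]
    set Pm := μ.withDensity (fun θ => ENNReal.ofReal (Z⁻¹ * f θ)) with hPm
    have hπ_int : Integrable (fun θ => Z⁻¹ * f θ) μ := hf_int.const_mul _
    have hπ_nn : 0 ≤ᵐ[μ] fun θ => Z⁻¹ * f θ :=
      ae_of_all _ fun θ => mul_nonneg (inv_nonneg.2 hZ_pos.le) (hf_nonneg θ)
    have hprob : IsProbabilityMeasure Pm := by
      constructor
      rw [hPm, withDensity_apply _ MeasurableSet.univ, setLIntegral_univ,
        ← ofReal_integral_eq_lintegral_ofReal hπ_int hπ_nn, integral_const_mul, ← hZ,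
        inv_mul_cancel₀ hZ_pos.ne']
      simp
    have hrn : Pm.rnDeriv Pm =ᵐ[Pm] fun _ => 1 := Measure.rnDeriv_self Pm
    have hlog : (fun θ => Real.log (Pm.rnDeriv Pm θ).toReal) =ᵐ[Pm] fun _ => (0 : ℝ) :=
      hrn.mono fun θ h => by simp [h]
    have hkl : klDiv Pm Pm = 0 := by
      rw [klDiv, if_pos ⟨Measure.AbsolutelyContinuous.refl Pm,
        (integrable_const (0 : ℝ)).congr hlog.symm⟩, integral_congr_ae hlog]
      simp
    have hgc : g =ᵐ[ν] fun _ => Real.log Z := by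
      have hfne : ∀ᵐ θ ∂ν, f θ ≠ 0 := by
        rw [ae_iff]
        simpa using hν_zero
      have hqπν : ∀ᵐ θ ∂ν, q θ = Z⁻¹ * f θ := hqπ.filter_mono hν_ac.ae_le
      filter_upwards [hfne, hqπν] with θ h1 h2
      rw [hg]
      simp only
      rw [h2, Real.log_mul (inv_ne_zero hZ_pos.ne') h1, Real.log_inv]
      ring
    have hvar : variance g ν = 0 := by
      rw [variance, evariance_congr_aux hgc]
      simp [evariance, integral_const, measure_univ]
    rw [hkl, hvar, mul_zero, ENNReal.ofReal_zero, add_zero]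
end
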